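/- Let delta >= 3, ell = 2^{delta-1} - 1, and f = floor((2^{2*delta-2} - delta)/delta). Let h(x) in Z_4[x] be a monic polynomial of degree delta-1 dividing x^ell - 1 in Z_4[x] whose reduction modulo 2 is a primitive polynomial over F_2, let R = Z_4[x]/(h(x)) with alpha the class of x (so alpha has multiplicative order ell and R is a free Z_4-module with basis 1, alpha, ..., alpha^{delta-2}), and let (t_1, ..., t_{ell+1}) = (0, 1, alpha, ..., alpha^{ell-1}). Enumerate r_{(j-1)(ell+1)+k} = t_k + 2*t_j for 1 <= j, k <= ell+1 (every element of R occurs exactly once in this list). For 0 <= i <= f, let N_i be the delta x delta matrix over Z_4 whose first row is (1, r_{delta*i+1}) and whose j-th row is (0, r_{delta*i+j} - r_{delta*i+1}) for 2 <= j <= delta, elements of R written as coordinate vectors with respect to the basis 1, alpha, ..., alpha^{delta-2}. Then each N_i is invertible over Z_4 (hence lies in PAut(H_{0,delta})), and Phi({N_i^{-1} : 0 <= i <= f}) is an f-PD-set of size f+1 for the Z_4-linear Hadamard code Phi(H_{0,delta}) of length 2^{2*delta-1} with respect to the information set Phi(I_{0,delta}). -/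

import Mathlib

/-!
The quaternary linear Hadamard code `H_{γ,δ}` of length `β = 2^{γ+2δ-2}` and type
`2^γ 4^δ`.  Throughout we write `δ = e + 1` (so `e = δ - 1 ≥ 0`).  Coordinate
positions are indexed by the vectors `w = (1, v, 2y) ∈ {1} × Z_4^{δ-1} × {0,2}^γ`
(the columns of the generator matrix), which we identify with pairs
`q = (v, y) : (Fin e → ZMod 4) × (Fin γ → ZMod 2)`.
-/

/-- Position labels for `H_{γ,δ}` (with `δ = e+1`). -/
abbrev QPos (e γ : ℕ) := (Fin e → ZMod 4) × (Fin γ → ZMod 2)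

/-- Row/column index type for `(γ+δ) × (γ+δ)` matrices, split into the blocks
`1 | δ-1 | γ`. -/
abbrev QIdx (e γ : ℕ) := Unit ⊕ Fin e ⊕ Fin γ

/-- The vector `w = (1, v, 2y) ∈ Z_4^{γ+δ}` labelling the position `q = (v, y)`. -/
def wvec {e γ : ℕ} (q : QPos e γ) : QIdx e γ → ZMod 4 :=
  Sum.elim (fun _ => 1) (Sum.elim q.1 (fun j => 2 * ((q.2 j).val : ZMod 4)))

/-- The quaternary linear Hadamard code `H_{γ,δ}` (with `δ = e+1`): the codewords are
the vectors `(u · w)_w` for `u ∈ Z_4^{γ+δ}`. -/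
def qHad (e γ : ℕ) : Finset (QPos e γ → ZMod 4) :=
  Finset.univ.image fun u : QIdx e γ → ZMod 4 => fun q => ∑ i, u i * wvec q i

/-- The Gray map `φ : Z_4 → F_2^2`, `φ(0)=(0,0)`, `φ(1)=(0,1)`, `φ(2)=(1,1)`,
`φ(3)=(1,0)`; `gray y b` is the `b`-th bit (`b = 0` is the first bit, at the odd
binary position `2i-1`, and `b = 1` the second, at position `2i`). -/
def gray (y : ZMod 4) : Fin 2 → ZMod 2 := fun b =>
  if b = 0 then (if y = 2 ∨ y = 3 then 1 else 0) else (if y = 1 ∨ y = 2 then 1 else 0)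

/-- The extended Gray map `Φ : Z_4^β → F_2^{2β}`; the binary positions are pairs
`(quaternary position, bit)`. -/
def grayMap {β : Type*} (v : β → ZMod 4) : β × Fin 2 → ZMod 2 := fun p => gray (v p.1) p.2

/-- The quaternary information set
`I_{γ,δ} = {e₁, e₁+e₂, …, e₁+e_δ, e₁+2e_{δ+1}, …, e₁+2e_{γ+δ}}` in terms of the
position labels `q = (v, y)`. -/
def qInfo (e γ : ℕ) : Finset (QPos e γ) :=
  insert (0, 0)
    ((Finset.univ.image fun j : Fin e => ((Pi.single j 1 : Fin e → ZMod 4), 0)) ∪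
     (Finset.univ.image fun j : Fin γ => (0, (Pi.single j 1 : Fin γ → ZMod 2))))

/-- The binary information set `Φ(I_{γ,δ})` for the `Z_4`-linear Hadamard code
`Φ(H_{γ,δ})`: both Gray positions of each of the `δ` quaternary positions
`e₁, e₁+e₂, …, e₁+e_δ`, together with the first Gray position of each of the
remaining `γ` positions. -/
def binInfo (e γ : ℕ) : Finset (QPos e γ × Fin 2) :=
  ((insert (0, 0)
      (Finset.univ.image fun j : Fin e => ((Pi.single j 1 : Fin e → ZMod 4), 0)))
    ×ˢ (Finset.univ : Finset (Fin 2))) ∪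
  ((Finset.univ.image fun j : Fin γ =>
      ((0 : Fin e → ZMod 4), (Pi.single j 1 : Fin γ → ZMod 2))).image
    fun q => (q, (0 : Fin 2)))

/-- Membership in `PAut(H_{γ,δ}) = π(L)`: `M` has block form
`[[1, η, 2θ], [0, A, 2X], [0, ζ(Y), ζ(B)]]` with `A ∈ GL(δ-1, Z_4)`,
`B ∈ GL(γ, Z_4)` (equivalently, the `{0,1}`-matrix `ζ(B)` is invertible over `Z_4`),
and `ζ` reducing entries modulo 2 to `{0,1} ⊆ Z_4`. -/
def inPAutQ (e γ : ℕ) (M : Matrix (QIdx e γ) (QIdx e γ) (ZMod 4)) : Prop :=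
  -- first column is `e₁`
  (∀ i, M i (Sum.inl ()) = if i = Sum.inl () then 1 else 0) ∧
  -- `θ`-block entries lie in `2·Z_4`
  (∀ j : Fin γ, ∃ a, M (Sum.inl ()) (Sum.inr (Sum.inr j)) = 2 * a) ∧
  -- `A`-block is invertible
  IsUnit (Matrix.of fun i j : Fin e => M (Sum.inr (Sum.inl i)) (Sum.inr (Sum.inl j))) ∧
  -- `X`-block entries lie in `2·Z_4`
  (∀ (i : Fin e) (j : Fin γ), ∃ a, M (Sum.inr (Sum.inl i)) (Sum.inr (Sum.inr j)) = 2 * a) ∧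
  -- `ζ(Y)`-block entries lie in `{0,1}`
  (∀ (i : Fin γ) (j : Fin e), M (Sum.inr (Sum.inr i)) (Sum.inr (Sum.inl j)) = 0 ∨
    M (Sum.inr (Sum.inr i)) (Sum.inr (Sum.inl j)) = 1) ∧
  -- `ζ(B)`-block entries lie in `{0,1}` and `ζ(B)` is invertible
  (∀ (i j : Fin γ), M (Sum.inr (Sum.inr i)) (Sum.inr (Sum.inr j)) = 0 ∨
    M (Sum.inr (Sum.inr i)) (Sum.inr (Sum.inr j)) = 1) ∧
  IsUnit (Matrix.of fun i j : Fin γ => M (Sum.inr (Sum.inr i)) (Sum.inr (Sum.inr j)))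

/-- The action of `M ∈ PAut(H_{γ,δ})` on the quaternary coordinate positions:
`w ↦ w·M`, written in terms of the labels `q = (v, y)` (for `M ∈ PAut(H_{γ,δ})`,
the first coordinate of `w·M` is `1` and its last `γ` coordinates lie in `{0,2}`). -/
def qAct {e γ : ℕ} (M : Matrix (QIdx e γ) (QIdx e γ) (ZMod 4)) (q : QPos e γ) :
    QPos e γ :=
  (fun j => Matrix.vecMul (wvec q) M (Sum.inr (Sum.inl j)),
   fun j => if Matrix.vecMul (wvec q) M (Sum.inr (Sum.inr j)) = 2 then 1 else 0)

/-- The induced permutation `Φ(M)` of the binary coordinate positions. -/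
def bAct {e γ : ℕ} (M : Matrix (QIdx e γ) (QIdx e γ) (ZMod 4)) (p : QPos e γ × Fin 2) :
    QPos e γ × Fin 2 :=
  (qAct M p.1, p.2)

/-!
Reduction modulo `2` maps `R = Z_4[x]/(h)` onto the field `F = F_2[x]/(h̄)` with `2^(δ-1)`
elements, maps the Teichmüller set bijectively onto `F`, and maps `r_{(j-1)(ℓ+1)+k} = t_k + 2 t_j`
to `t̄_k`. Hence the rows `r_{δi+j} - r_{δi+1}` of the lower block of `N_i` reduce to the
differences of `δ` cyclically consecutive elements of `0, 1, ᾱ, …, ᾱ^(ℓ-1)`, and such a window is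
affinely independent over `F_2`: if it contains `0`, its other elements are a multiple of the power
basis `1, ᾱ, …, ᾱ^(δ-2)`; otherwise it is a multiple of `1, ᾱ, …, ᾱ^(δ-1)`, which are affinely
independent because `h̄` is irreducible of degree at least `2`, hence coprime to `x - 1`. So the
lower block, and with it `N_i`, is invertible modulo `2`, hence over `Z_4`.

Since `N_i` fixes `e₁`, `N_i⁻¹` moves the position `w` into `I_{0,δ}` only if `w` is the first row
of `N_i` or the first row plus another row, i.e. only if `w` is labelled by one of
`r_{δi+1}, …, r_{δi+δ}`. The `r_n` are distinct and these index blocks are disjoint, so each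
position in `E` rules out at most one `i`, and `|E| = f < f + 1` leaves some `i` free.
-/

open Polynomial

/-- `teich β i` is the paper's `t_{i+1}`. -/
def teich {M : Type*} [MonoidWithZero M] (β : M) (k : ℕ) : M := if k = 0 then 0 else β ^ (k - 1)

/-- `teichExpansion β (ℓ + 1) n` is the paper's `r_{n+1}`. -/
def teichExpansion {R : Type*} [CommRing R] (β : R) (m n : ℕ) : R :=
  teich β (n % m) + 2 * teich β (n / m)

section Teich

variable {M : Type*} [MonoidWithZero M] (β : M)

@[simp] theorem teich_zero : teich β 0 = 0 := if_pos rfl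

theorem teich_of_ne_zero {k : ℕ} (hk : k ≠ 0) : teich β k = β ^ (k - 1) := if_neg hk

theorem teich_injOn [Nontrivial M] : Set.InjOn (teich β) (Set.Iio (orderOf β + 1)) := by
  have hpow : ∀ {a k}, a ∈ Set.Iio (orderOf β + 1) → a ≠ 0 → β ^ k ≠ 0 := fun ha ha0 =>
    ((orderOf_pos_iff.1 (by simp at ha; omega)).isUnit.pow _).ne_zero
  intro a ha b hb hab
  rcases eq_or_ne a 0 with rfl | ha0 <;> rcases eq_or_ne b 0 with rfl | hb0
  · rfl
  · exact absurd (teich_of_ne_zero β hb0 ▸ hab).symm (hpow hb hb0)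
  · exact absurd (teich_of_ne_zero β ha0 ▸ hab) (hpow ha ha0)
  · rw [teich_of_ne_zero β ha0, teich_of_ne_zero β hb0] at hab
    simp only [Set.mem_Iio] at ha hb
    have := pow_injOn_Iio_orderOf (x := β) (by simp; omega : a - 1 ∈ Set.Iio _)
      (by simp; omega : b - 1 ∈ Set.Iio _) hab
    omega

end Teich

theorem injOn_digits_add_two_mul {R S : Type*} [Ring R] [Ring S] (φ : R →+* S)
    (h2 : φ 2 = 0) (hφ : ∀ x, 2 * x = 0 → φ x = 0) {m : ℕ} {t : ℕ → R}
    (ht : Set.InjOn (φ ∘ t) (Set.Iio m)) :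
    Set.InjOn (fun n => t (n % m) + 2 * t (n / m)) (Set.Iio (m * m)) := by
  intro n hn n' hn' hnn'
  simp only [Set.mem_Iio] at hn hn' hnn'
  have hm : 0 < m := Nat.pos_of_ne_zero (by rintro rfl; simp at hn)
  have hmod : n % m = n' % m := by
    refine ht (Nat.mod_lt _ hm) (Nat.mod_lt _ hm) ?_
    simpa [h2] using congrArg φ hnn'
  have hdiv : n / m = n' / m := by
    refine ht (Nat.div_lt_of_lt_mul hn) (Nat.div_lt_of_lt_mul hn') ?_
    have : 2 * (t (n / m) - t (n' / m)) = 0 := by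
      simp only [hmod] at hnn'
      rw [mul_sub, sub_eq_zero]
      exact add_left_cancel hnn'
    simpa [sub_eq_zero] using hφ _ this
  rw [← Nat.div_add_mod n m, ← Nat.div_add_mod n' m, hmod, hdiv]

namespace AdjoinRoot

theorem root_pow_eq_one_iff {R : Type*} [CommRing R] {p : R[X]} {k : ℕ} :
    root p ^ k = 1 ↔ p ∣ X ^ k - 1 := by
  rw [← mk_eq_zero]
  simp [sub_eq_zero]

theorem orderOf_root {R : Type*} [CommRing R] {p : R[X]} {ℓ : ℕ} (hℓ : 0 < ℓ)
    (hdvd : p ∣ X ^ ℓ - 1) (hmin : ∀ k, 0 < k → k < ℓ → ¬ p ∣ X ^ k - 1) :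
    orderOf (root p) = ℓ :=
  (orderOf_eq_iff hℓ).2
    ⟨root_pow_eq_one_iff.2 hdvd, fun k hk hk0 => mt root_pow_eq_one_iff.1 (hmin k hk0 hk)⟩

theorem map_eq_sum_repr {A B : Type*} [CommRing A] [CommRing B] (g : A →+* B) {p : A[X]}
    {ι : Type*} [Fintype ι] (b : Module.Basis ι A (AdjoinRoot p)) {d : ι → ℕ}
    (hb : ∀ j, b j = root p ^ d j) (x : AdjoinRoot p) :
    map g p (p.map g) dvd_rfl x = ∑ j, of (p.map g) (g (b.repr x j)) * root (p.map g) ^ d j := by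
  conv_lhs => rw [← b.sum_repr x]
  simp [hb, Algebra.smul_def]

variable {K : Type*} [Field K] {f : K[X]} [Fact (Irreducible f)]

theorem linearIndependent_root_pow :
    LinearIndependent K (fun j : Fin f.natDegree => root f ^ (j : ℕ)) := by
  have := (powerBasis (Fact.out : Irreducible f).ne_zero).basis.linearIndependent
  rw [PowerBasis.coe_basis] at this
  exact this

theorem affineIndependent_root_pow (hf : 2 ≤ f.natDegree) :
    AffineIndependent K (fun s : Fin (f.natDegree + 1) => root f ^ (s : ℕ)) := by
  rw [affineIndependent_iff]
  intro s w hw hws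
  set P : K[X] := ∑ i ∈ s, C (w i) * X ^ (i : ℕ)
  have hP : P = 0 := by
    have hf1 : f ∣ P := by
      rw [← mk_eq_zero, ← hws]
      simp [P, Algebra.smul_def]
    have hX1 : X - C 1 ∣ P := by
      rw [dvd_iff_isRoot]
      simp [P, eval_finsetSum, hw]
    have hcop : IsCoprime (X - C 1) f :=
      ((Fact.out : Irreducible f).coprime_iff_not_dvd.2 fun hdvd => by
        have := natDegree_le_of_dvd hdvd (X_sub_C_ne_zero 1)
        rw [natDegree_X_sub_C] at this; omega).symm
    refine eq_zero_of_dvd_of_natDegree_lt (hcop.mul_dvd hX1 hf1) ?_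
    rw [natDegree_mul (X_sub_C_ne_zero 1) (Fact.out : Irreducible f).ne_zero,
      natDegree_X_sub_C]
    have : P.natDegree ≤ f.natDegree := natDegree_sum_le_of_forall_le _ _ fun i _ =>
      (natDegree_C_mul_X_pow_le _ _).trans (by omega)
    omega
  intro i hi
  have := congrArg (coeff · (i : ℕ)) hP
  simpa [P, finsetSum_coeff, coeff_C_mul_X_pow, Fin.val_inj, hi] using this

variable {ℓ : ℕ}

theorem affineIndependent_teich_window_of_not_zero (hf : 2 ≤ f.natDegree) (hβ : root f ^ ℓ = 1)
    {k : ℕ} (hk : k ≠ 0) (hkℓ : k + f.natDegree ≤ ℓ) :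
    AffineIndependent K (fun s : Fin (f.natDegree + 1) => teich (root f) (k + s)) := by
  have hβ0 : root f ^ (k - 1) ≠ 0 :=
    pow_ne_zero _ fun h0 => by simp [h0, zero_pow (show ℓ ≠ 0 by omega)] at hβ
  let μ : AdjoinRoot f →ₗ[K] AdjoinRoot f := LinearMap.mulLeft K (root f ^ (k - 1))
  have hwindow : (fun s : Fin (f.natDegree + 1) => teich (root f) (k + s)) =
      μ.toAffineMap ∘ fun s : Fin (f.natDegree + 1) => root f ^ (s : ℕ) := by
    funext s
    rw [teich_of_ne_zero _ (by omega)]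
    simp only [Function.comp_apply, LinearMap.coe_toAffineMap, μ, LinearMap.mulLeft_apply,
      ← pow_add]
    exact congrArg _ (by omega)
  rw [hwindow]
  exact (affineIndependent_root_pow hf).map' μ.toAffineMap (mul_right_injective₀ hβ0)

theorem affineIndependent_teich_window_of_zero (hℓ : f.natDegree ≤ ℓ) (hβ : root f ^ ℓ = 1)
    {k : ℕ} (hk : k < ℓ + 1) (i₀ : Fin (f.natDegree + 1))
    (hk₀ : (k = 0 ∧ (i₀ : ℕ) = 0) ∨ (k ≠ 0 ∧ k + i₀ = ℓ + 1)) :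
    AffineIndependent K
      (fun s : Fin (f.natDegree + 1) => teich (root f) ((k + s) % (ℓ + 1))) := by
  have hβ0 : root f ^ (k - 1) ≠ 0 := by
    rcases hk₀ with ⟨rfl, -⟩ | ⟨hk0, -⟩
    · simp
    · exact pow_ne_zero _ fun h0 => by simp [h0, zero_pow (show ℓ ≠ 0 by omega)] at hβ
  -- for `k = 0` the truncated exponent `k - 1 = 0` makes `μ` the identity
  let μ : AdjoinRoot f →ₗ[K] AdjoinRoot f := LinearMap.mulLeft K (root f ^ (k - 1))
  have hzero : teich (root f) ((k + i₀) % (ℓ + 1)) = 0 := by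
    rcases hk₀ with ⟨rfl, h⟩ | ⟨-, h⟩ <;> simp [h]
  have hsucc (j : Fin f.natDegree) :
      teich (root f) ((k + i₀.succAbove j) % (ℓ + 1)) = μ (root f ^ (j : ℕ)) := by
    simp only [μ, LinearMap.mulLeft_apply, ← pow_add]
    by_cases hj : j.castSucc < i₀
    · rw [Fin.succAbove_of_castSucc_lt _ _ hj, Fin.val_castSucc]
      rw [Fin.lt_def, Fin.val_castSucc] at hj
      rw [Nat.mod_eq_of_lt (by omega), teich_of_ne_zero _ (by omega)]
      exact congrArg _ (by omega)
    · rw [Fin.succAbove_of_le_castSucc _ _ (not_lt.1 hj), Fin.val_succ]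
      rw [not_lt, Fin.le_def, Fin.val_castSucc] at hj
      by_cases h0 : k = 0
      · rw [h0, Nat.mod_eq_of_lt (by omega), teich_of_ne_zero _ (by omega)]
        exact congrArg _ (by omega)
      · rw [Nat.mod_eq_sub_mod (by omega), Nat.mod_eq_of_lt (by omega),
          teich_of_ne_zero _ (by omega), ← mul_one (root f ^ (k + (j + 1) - (ℓ + 1) - 1)),
          ← hβ, ← pow_add]
        exact congrArg _ (by omega)
  rw [affineIndependent_iff_linearIndependent_vsub K _ i₀]
  refine (linearIndependent_equiv' (finSuccAboveEquiv i₀) ?_).1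
    (linearIndependent_root_pow.map_injOn μ (mul_right_injective₀ hβ0).injOn)
  funext j
  simp [finSuccAboveEquiv_apply, hzero, hsucc]

theorem affineIndependent_teich_window (hf : 2 ≤ f.natDegree) (hℓ : f.natDegree ≤ ℓ)
    (hβ : root f ^ ℓ = 1) (n : ℕ) :
    AffineIndependent K (fun s : Fin (f.natDegree + 1) => teich (root f) ((n + s) % (ℓ + 1))) := by
  have hk : n % (ℓ + 1) < ℓ + 1 := Nat.mod_lt _ (by omega)
  simp_rw [← Nat.mod_add_mod n]
  by_cases hwrap : n % (ℓ + 1) = 0 ∨ ℓ < n % (ℓ + 1) + f.natDegree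
  · by_cases h0 : n % (ℓ + 1) = 0
    · exact affineIndependent_teich_window_of_zero hℓ hβ hk 0 (.inl ⟨h0, rfl⟩)
    · exact affineIndependent_teich_window_of_zero hℓ hβ hk ⟨ℓ + 1 - n % (ℓ + 1), by omega⟩
        (.inr ⟨h0, by simp only; omega⟩)
  · have hmod (s : Fin (f.natDegree + 1)) : (n % (ℓ + 1) + s) % (ℓ + 1) = n % (ℓ + 1) + s :=
      Nat.mod_eq_of_lt (by omega)
    simp_rw [hmod]
    exact affineIndependent_teich_window_of_not_zero hf hβ (by omega) (by omega)

theorem linearIndependent_teich_sub {e : ℕ} (hfe : f.natDegree = e) (hf : 2 ≤ e) (hℓ : e ≤ ℓ)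
    (hβ : root f ^ ℓ = 1) (n : ℕ) :
    LinearIndependent K (fun j : Fin e =>
      teich (root f) ((n + j + 1) % (ℓ + 1)) - teich (root f) (n % (ℓ + 1))) := by
  subst hfe
  have := (affineIndependent_iff_linearIndependent_vsub K _ 0).1
    (affineIndependent_teich_window hf hℓ hβ n)
  rw [← linearIndependent_equiv (finSuccAboveEquiv 0)] at this
  simpa [Function.comp_def, add_assoc, finSuccAboveEquiv_apply] using this

end AdjoinRoot

abbrev mod2 : ZMod 4 →+* ZMod 2 := ZMod.castHom (show (2 : ℕ) ∣ 4 by norm_num) (ZMod 2)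

theorem mod2_eq_zero_of_two_mul_eq_zero {a : ZMod 4} (ha : 2 * a = 0) : mod2 a = 0 := by
  revert a
  decide

theorem Matrix.isUnit_of_isUnit_map_mod2 {ι : Type*} [Fintype ι] [DecidableEq ι]
    {A : Matrix ι ι (ZMod 4)} (hA : IsUnit (A.map mod2)) : IsUnit A := by
  have hlift : ∀ a : ZMod 4, mod2 a ≠ 0 → a * a = 1 := by decide
  rw [Matrix.isUnit_iff_isUnit_det] at hA ⊢
  rw [← RingHom.mapMatrix_apply, ← RingHom.map_det, isUnit_iff_ne_zero] at hA
  exact IsUnit.of_mul_eq_one _ (hlift _ hA)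

section GaloisRing

open AdjoinRoot

variable {h : (ZMod 4)[X]}

local notation "reduce" => AdjoinRoot.map mod2 h (h.map mod2) dvd_rfl

theorem reduce_teich (k : ℕ) : reduce (teich (root h) k) = teich (root (h.map mod2)) k := by
  unfold teich
  split_ifs <;> simp

theorem reduce_two : reduce (2 : AdjoinRoot h) = 0 := by
  rw [map_ofNat, ← map_ofNat (of (h.map mod2)) 2, show (2 : ZMod 2) = 0 from rfl, map_zero]

theorem reduce_teichExpansion (m n : ℕ) :
    reduce (teichExpansion (root h) m n) = teich (root (h.map mod2)) (n % m) := by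
  simp [teichExpansion, reduce_teich, reduce_two]

variable {e : ℕ} (b : Module.Basis (Fin e) (ZMod 4) (AdjoinRoot h))

theorem reduce_eq_zero_of_two_mul_eq_zero (hb : ∀ j, b j = root h ^ (j : ℕ))
    {x : AdjoinRoot h} (hx : 2 * x = 0) : reduce x = 0 := by
  rw [map_eq_sum_repr mod2 b hb]
  refine Finset.sum_eq_zero fun j _ => ?_
  have hx' : (2 : ZMod 4) • x = 0 := by rwa [two_smul, ← two_mul]
  have : 2 * b.repr x j = 0 := by simpa using congrArg (fun y => b.repr y j) hx'
  simp [mod2_eq_zero_of_two_mul_eq_zero this]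

theorem injOn_teichExpansion [Nontrivial (AdjoinRoot (h.map mod2))]
    (hb : ∀ j, b j = root h ^ (j : ℕ)) {m : ℕ} (hm : orderOf (root (h.map mod2)) + 1 = m) :
    Set.InjOn (teichExpansion (root h) m) (Set.Iio (m * m)) := by
  refine injOn_digits_add_two_mul reduce reduce_two
    (fun x => reduce_eq_zero_of_two_mul_eq_zero b hb) ?_
  have : reduce ∘ teich (root h) = teich (root (h.map mod2)) := funext reduce_teich
  rw [this, ← hm]
  exact teich_injOn _

theorem isUnit_of_linearIndependent_reduce (hb : ∀ j, b j = root h ^ (j : ℕ))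
    {x : Fin e → AdjoinRoot h} (hx : LinearIndependent (ZMod 2) (reduce ∘ x)) :
    IsUnit (Matrix.of fun k j => b.repr (x k) j) := by
  refine Matrix.isUnit_of_isUnit_map_mod2 (Matrix.linearIndependent_rows_iff_isUnit.1 ?_)
  refine LinearIndependent.of_comp
    (Fintype.linearCombination (ZMod 2) fun j : Fin e => root (h.map mod2) ^ (j : ℕ)) ?_
  convert hx using 1
  funext k
  simp [Fintype.linearCombination_apply, map_eq_sum_repr mod2 b hb, Algebra.smul_def]

theorem isUnit_repr_teichExpansion_sub [Fact (Irreducible (h.map mod2))] (he : 2 ≤ e)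
    (hdeg : (h.map mod2).natDegree = e) (hdvd : h.map mod2 ∣ X ^ (2 ^ e - 1) - 1)
    (hb : ∀ j, b j = root h ^ (j : ℕ)) (n : ℕ) :
    IsUnit (Matrix.of fun k j : Fin e => b.repr
      (teichExpansion (root h) (2 ^ e) (n + k + 1) - teichExpansion (root h) (2 ^ e) n) j) := by
  refine isUnit_of_linearIndependent_reduce b hb ?_
  have := linearIndependent_teich_sub hdeg he (by have := @Nat.lt_two_pow_self e; omega)
    (root_pow_eq_one_iff.2 hdvd) n
  rw [Nat.sub_add_cancel Nat.one_le_two_pow] at this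
  convert this using 1
  funext k
  simp [reduce_teichExpansion]

end GaloisRing

theorem Finset.exists_forall_not_of_card_lt {α β : Type*} {E : Finset α} {S : Finset β}
    {P : α → β → Prop} (hP : ∀ a ∈ E, ∀ i ∈ S, ∀ j ∈ S, P a i → P a j → i = j)
    (hcard : E.card < S.card) : ∃ i ∈ S, ∀ a ∈ E, ¬ P a i := by
  by_contra! hcon
  exact hcard.not_ge (Finset.card_le_card_of_forall_subsingleton (fun i a => P a i) hcon
    fun a ha i hi j hj => hP a ha i hi.1 j hj.1 hi.2 hj.2)

theorem mul_add_lt_two_pow_mul_two_pow {e i k : ℕ}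
    (hi : i ≤ (2 ^ (2 * e) - (e + 1)) / (e + 1)) (hk : k ≤ e) :
    (e + 1) * i + k < 2 ^ e * 2 ^ e := by
  have h1 : (e + 1) * i ≤ 2 ^ (2 * e) - (e + 1) :=
    (Nat.mul_le_mul_left _ hi).trans (Nat.mul_div_le _ _)
  have h2 : e + 1 ≤ 2 ^ (2 * e) :=
    Nat.lt_two_pow_self.trans_le (Nat.pow_le_pow_right (by norm_num) (by omega))
  rw [← pow_add, ← two_mul]
  omega

theorem eq_of_mul_add_eq_mul_add {d i j k k' : ℕ} (hk : k < d) (hk' : k' < d)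
    (h : d * i + k = d * j + k') : i = j := by
  have hd : 0 < d := by omega
  have := congrArg (· / d) h
  simpa [Nat.mul_add_div hd, Nat.div_eq_of_lt hk, Nat.div_eq_of_lt hk'] using this

theorem eq_of_injOn_mul_add {α : Type*} {g : ℕ → α} {e i j k k' : ℕ}
    (hg : Set.InjOn g (Set.Iio (2 ^ e * 2 ^ e))) (hi : i ≤ (2 ^ (2 * e) - (e + 1)) / (e + 1))
    (hj : j ≤ (2 ^ (2 * e) - (e + 1)) / (e + 1)) (hk : k ≤ e) (hk' : k' ≤ e)
    (h : g ((e + 1) * i + k) = g ((e + 1) * j + k')) : i = j :=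
  eq_of_mul_add_eq_mul_add (Nat.lt_succ_of_le hk) (Nat.lt_succ_of_le hk')
    (hg (mul_add_lt_two_pow_mul_two_pow hi hk) (mul_add_lt_two_pow_mul_two_pow hj hk') h)

section PAut

open Matrix

variable {e : ℕ}

theorem Matrix.det_eq_det_of_col_inl {R : Type*} [CommRing R] (M : Matrix (QIdx e 0) (QIdx e 0) R)
    (h11 : M (Sum.inl ()) (Sum.inl ()) = 1) (h21 : ∀ k, M (Sum.inr (Sum.inl k)) (Sum.inl ()) = 0) :
    M.det = (Matrix.of fun k j : Fin e => M (Sum.inr (Sum.inl k)) (Sum.inr (Sum.inl j))).det := by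
  have hM : M.toBlocks₂₁ = 0 := by
    ext (k | k) ⟨⟩
    exacts [h21 k, k.elim0]
  have hD : M.toBlocks₂₂.toBlocks₂₁ = 0 := by
    ext k
    exact k.elim0
  rw [← M.fromBlocks_toBlocks, hM, det_fromBlocks_zero₂₁, det_unique,
    ← M.toBlocks₂₂.fromBlocks_toBlocks, hD, det_fromBlocks_zero₂₁, det_isEmpty (n := Fin 0)]
  simp [toBlocks₁₁, toBlocks₂₂, h11]

theorem mulVec_single_inl_of_col {R : Type*} [CommRing R] {M : Matrix (QIdx e 0) (QIdx e 0) R}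
    (h11 : M (Sum.inl ()) (Sum.inl ()) = 1) (h21 : ∀ k, M (Sum.inr (Sum.inl k)) (Sum.inl ()) = 0) :
    M *ᵥ Pi.single (Sum.inl ()) 1 = Pi.single (Sum.inl ()) 1 := by
  ext (⟨⟩ | k | k)
  exacts [by simp [h11], by simp [h21], k.elim0]

theorem isUnit_of_col_inl {R : Type*} [CommRing R] {M : Matrix (QIdx e 0) (QIdx e 0) R}
    (h11 : M (Sum.inl ()) (Sum.inl ()) = 1) (h21 : ∀ k, M (Sum.inr (Sum.inl k)) (Sum.inl ()) = 0)
    (hA : IsUnit (Matrix.of fun k j : Fin e => M (Sum.inr (Sum.inl k)) (Sum.inr (Sum.inl j)))) :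
    IsUnit M := by
  rw [isUnit_iff_isUnit_det, M.det_eq_det_of_col_inl h11 h21, ← isUnit_iff_isUnit_det]
  exact hA

theorem inPAutQ_zero {M : Matrix (QIdx e 0) (QIdx e 0) (ZMod 4)}
    (hcol : M *ᵥ Pi.single (Sum.inl ()) 1 = Pi.single (Sum.inl ()) 1)
    (hA : IsUnit (Matrix.of fun k j : Fin e => M (Sum.inr (Sum.inl k)) (Sum.inr (Sum.inl j)))) :
    inPAutQ e 0 M := by
  refine ⟨fun i => ?_, fun j => j.elim0, hA, fun _ j => j.elim0, fun i => i.elim0,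
    fun i => i.elim0, (isUnit_iff_isUnit_det _).2 (by simp)⟩
  simpa [mulVec_single_one, Pi.single_apply] using congrFun hcol i

theorem wvec_zero : wvec ((0, 0) : QPos e 0) = Pi.single (Sum.inl ()) 1 := by
  ext (⟨⟩ | j | j)
  exacts [rfl, rfl, j.elim0]

theorem wvec_single (k : Fin e) :
    wvec ((Pi.single k 1, 0) : QPos e 0) =
      Pi.single (Sum.inl ()) 1 + Pi.single (Sum.inr (Sum.inl k)) 1 := by
  ext (⟨⟩ | j | j)
  · simp [wvec]
  · simp [wvec, Pi.single_apply]
  · exact j.elim0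

theorem wvec_qAct {M : Matrix (QIdx e 0) (QIdx e 0) (ZMod 4)}
    (hcol : M *ᵥ Pi.single (Sum.inl ()) 1 = Pi.single (Sum.inl ()) 1) (q : QPos e 0) :
    wvec (qAct M q) = wvec q ᵥ* M := by
  ext (⟨⟩ | j | j)
  · have := congrArg (wvec q ⬝ᵥ ·) hcol
    simp only [dotProduct_mulVec, dotProduct_single, mul_one] at this
    simpa [wvec] using this.symm
  · rfl
  · exact j.elim0

theorem mem_binInfo_zero {p : QPos e 0 × Fin 2} :
    p ∈ binInfo e 0 ↔ p.1 = (0, 0) ∨ ∃ k, p.1 = (Pi.single k 1, 0) := by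
  simp [binInfo, eq_comm]

theorem wvec_eq_row_of_bAct_inv_mem {M : Matrix (QIdx e 0) (QIdx e 0) (ZMod 4)} (hM : IsUnit M)
    (hcol : M *ᵥ Pi.single (Sum.inl ()) 1 = Pi.single (Sum.inl ()) 1) {p : QPos e 0 × Fin 2}
    (hp : bAct M⁻¹ p ∈ binInfo e 0) :
    wvec p.1 = M.row (Sum.inl ()) ∨
      ∃ k, wvec p.1 = M.row (Sum.inl ()) + M.row (Sum.inr (Sum.inl k)) := by
  have hdet := (isUnit_iff_isUnit_det M).1 hM
  have hcol' : M⁻¹ *ᵥ Pi.single (Sum.inl ()) 1 = Pi.single (Sum.inl ()) 1 := by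
    conv_lhs => rw [← hcol, mulVec_mulVec, nonsing_inv_mul M hdet, one_mulVec]
  have hw : wvec p.1 = wvec (qAct M⁻¹ p.1) ᵥ* M := by
    rw [wvec_qAct hcol', vecMul_vecMul, nonsing_inv_mul M hdet, vecMul_one]
  rcases mem_binInfo_zero.1 hp with hq | ⟨k, hq⟩
  · left
    rw [hw, show qAct M⁻¹ p.1 = (0, 0) from hq, wvec_zero, single_one_vecMul]
  · right
    refine ⟨k, ?_⟩
    rw [hw, show qAct M⁻¹ p.1 = (Pi.single k 1, 0) from hq, wvec_single, add_vecMul,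
      single_one_vecMul, single_one_vecMul]

theorem exists_repr_eq_of_bAct_inv_mem {V : Type*} [AddCommGroup V] [Module (ZMod 4) V]
    (b : Module.Basis (Fin e) (ZMod 4) V) (x : ℕ → V) {M : Matrix (QIdx e 0) (QIdx e 0) (ZMod 4)}
    (hM : IsUnit M) (hcol : M *ᵥ Pi.single (Sum.inl ()) 1 = Pi.single (Sum.inl ()) 1)
    (hrow₀ : ∀ j, M (Sum.inl ()) (Sum.inr (Sum.inl j)) = b.repr (x 0) j)
    (hrow : ∀ k j, M (Sum.inr (Sum.inl k)) (Sum.inr (Sum.inl j)) = b.repr (x (k + 1) - x 0) j)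
    {p : QPos e 0 × Fin 2} (hp : bAct M⁻¹ p ∈ binInfo e 0) :
    ∃ k ≤ e, p.1.1 = b.repr (x k) := by
  rcases wvec_eq_row_of_bAct_inv_mem hM hcol hp with hw | ⟨k, hw⟩
  · refine ⟨0, Nat.zero_le _, funext fun j => (congrFun hw (Sum.inr (Sum.inl j))).trans ?_⟩
    simp [hrow₀]
  · refine ⟨k + 1, k.isLt, funext fun j => (congrFun hw (Sum.inr (Sum.inl j))).trans ?_⟩
    simp [hrow₀, hrow]

theorem eq_of_bAct_inv_mem_binInfo {V : Type*} [AddCommGroup V] [Module (ZMod 4) V]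
    (b : Module.Basis (Fin e) (ZMod 4) V) {x : ℕ → V} (hx : Set.InjOn x (Set.Iio (2 ^ e * 2 ^ e)))
    {N : ℕ → Matrix (QIdx e 0) (QIdx e 0) (ZMod 4)} (hN : ∀ i, IsUnit (N i))
    (hcol : ∀ i, N i *ᵥ Pi.single (Sum.inl ()) 1 = Pi.single (Sum.inl ()) 1)
    (hrow₀ : ∀ i j, N i (Sum.inl ()) (Sum.inr (Sum.inl j)) = b.repr (x ((e + 1) * i)) j)
    (hrow : ∀ i (k j : Fin e), N i (Sum.inr (Sum.inl k)) (Sum.inr (Sum.inl j)) =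
      b.repr (x ((e + 1) * i + k + 1) - x ((e + 1) * i)) j)
    {i j : ℕ} (hi : i ≤ (2 ^ (2 * e) - (e + 1)) / (e + 1))
    (hj : j ≤ (2 ^ (2 * e) - (e + 1)) / (e + 1)) {p : QPos e 0 × Fin 2}
    (hpi : bAct (N i)⁻¹ p ∈ binInfo e 0) (hpj : bAct (N j)⁻¹ p ∈ binInfo e 0) : i = j := by
  obtain ⟨k, hk, hki⟩ := exists_repr_eq_of_bAct_inv_mem b (fun k => x ((e + 1) * i + k)) (hN i)
    (hcol i) (hrow₀ i) (hrow i) hpi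
  obtain ⟨k', hk', hkj⟩ := exists_repr_eq_of_bAct_inv_mem b (fun k => x ((e + 1) * j + k)) (hN j)
    (hcol j) (hrow₀ j) (hrow j) hpj
  exact eq_of_injOn_mul_add hx hi hj hk hk'
    (b.repr.injective (DFunLike.coe_injective (hki.symm.trans hkj)))

end PAut

/-- Explicit construction of an `f`-PD-set of size `f+1` for the `Z_4`-linear Hadamard
code `Φ(H_{0,δ})` of length `2^{2δ-1}`, where `δ = e + 1 ≥ 3` and
`f = ⌊(2^{2δ-2} - δ)/δ⌋`.  Here `h ∈ Z_4[x]` is a monic polynomial of degree `δ-1 = e`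
dividing `x^ℓ - 1` (`ℓ = 2^{δ-1} - 1 = 2^e - 1`) whose reduction modulo 2 is a
primitive polynomial over `F_2` (irreducible, dividing `x^ℓ - 1` and no `x^k - 1`
for `0 < k < ℓ`); `R = Z_4[x]/(h)` is the Galois ring `GR(4^{δ-1})`, realised as
`AdjoinRoot h`, with `α = AdjoinRoot.root h` the class of `x`, and `R` is a free
`Z_4`-module with basis `1, α, …, α^{e-1}` (the basis `b`).  The elements of `R` are
enumerated as `r n = t (n % 2^e) + 2 · t (n / 2^e)` (`0`-indexed), where
`(t 0, t 1, …, t ℓ) = (0, 1, α, …, α^{ℓ-1})` is the Teichmüller set.  For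
`0 ≤ i ≤ f`, `N_i` is the `δ × δ` matrix over `Z_4` with first row `(1, r (δi))` and
`(k+2)`-nd row `(0, r (δi + k + 1) - r (δi))` for `0 ≤ k ≤ e - 1`, elements of `R`
written in coordinates w.r.t. `b`.  Then each `N_i` is invertible (hence lies in
`PAut(H_{0,δ})`) and `Φ({N_i⁻¹ : 0 ≤ i ≤ f})` is an `f`-PD-set of size `f+1` for
`Φ(H_{0,δ})` with respect to `Φ(I_{0,δ})`. -/
theorem stmt15 (e : ℕ) (he : 2 ≤ e)
    (h : Polynomial (ZMod 4)) (hmon : h.Monic) (hdeg : h.natDegree = e)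
    -- the reduction of `h` modulo 2 is a primitive polynomial over `F_2`
    (hirr : Irreducible (h.map (ZMod.castHom (show (2 : ℕ) ∣ 4 by norm_num) (ZMod 2))))
    (hdvd2 : (h.map (ZMod.castHom (show (2 : ℕ) ∣ 4 by norm_num) (ZMod 2))) ∣
      Polynomial.X ^ (2 ^ e - 1) - 1)
    (hmin : ∀ k, 0 < k → k < 2 ^ e - 1 →
      ¬ (h.map (ZMod.castHom (show (2 : ℕ) ∣ 4 by norm_num) (ZMod 2))) ∣
        Polynomial.X ^ k - 1)
    -- `R = AdjoinRoot h` is free over `Z_4` with basis `1, α, …, α^{e-1}`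
    (b : Module.Basis (Fin e) (ZMod 4) (AdjoinRoot h))
    (hb : ∀ j : Fin e, b j = AdjoinRoot.root h ^ (j : ℕ))
    -- the Teichmüller enumeration `t` and the enumeration `r` of the elements of `R`
    (t : ℕ → AdjoinRoot h)
    (ht : ∀ k, t k = if k = 0 then 0 else AdjoinRoot.root h ^ (k - 1))
    (r : ℕ → AdjoinRoot h)
    (hr : ∀ n, r n = t (n % 2 ^ e) + 2 * t (n / 2 ^ e))
    -- the matrices `N_i`
    (N : ℕ → Matrix (QIdx e 0) (QIdx e 0) (ZMod 4))
    (hN1 : ∀ i, N i (Sum.inl ()) (Sum.inl ()) = 1)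
    (hN2 : ∀ i (j : Fin e), N i (Sum.inl ()) (Sum.inr (Sum.inl j)) =
      b.repr (r ((e + 1) * i)) j)
    (hN3 : ∀ i (k : Fin e), N i (Sum.inr (Sum.inl k)) (Sum.inl ()) = 0)
    (hN4 : ∀ i (k j : Fin e), N i (Sum.inr (Sum.inl k)) (Sum.inr (Sum.inl j)) =
      b.repr (r ((e + 1) * i + (k : ℕ) + 1) - r ((e + 1) * i)) j) :
    -- each `N_i` is invertible over `Z_4`, hence lies in `PAut(H_{0,δ})`
    (∀ i, i ≤ (2 ^ (2 * e) - (e + 1)) / (e + 1) → IsUnit (N i) ∧ inPAutQ e 0 (N i)) ∧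
    -- the inverses are pairwise distinct, so the PD-set has size `f + 1`
    (∀ i j, i ≤ (2 ^ (2 * e) - (e + 1)) / (e + 1) →
      j ≤ (2 ^ (2 * e) - (e + 1)) / (e + 1) → (N i)⁻¹ = (N j)⁻¹ → i = j) ∧
    -- `Φ({N_i⁻¹})` is an `f`-PD-set for `Φ(H_{0,δ})` w.r.t. `Φ(I_{0,δ})`
    (∀ E : Finset (QPos e 0 × Fin 2), E.card = (2 ^ (2 * e) - (e + 1)) / (e + 1) →
      ∃ i ≤ (2 ^ (2 * e) - (e + 1)) / (e + 1),
        ∀ p ∈ E, bAct (N i)⁻¹ p ∉ binInfo e 0) := by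
  have := Fact.mk hirr
  obtain rfl : t = teich (AdjoinRoot.root h) := funext ht
  obtain rfl : r = teichExpansion (AdjoinRoot.root h) (2 ^ e) := funext hr
  have hinj := injOn_teichExpansion b hb (m := 2 ^ e) <| by
    rw [AdjoinRoot.orderOf_root (by have := @Nat.lt_two_pow_self e; omega) hdvd2 hmin]
    exact Nat.sub_add_cancel Nat.one_le_two_pow
  have hA (i : ℕ) :
      IsUnit (Matrix.of fun k j : Fin e => N i (Sum.inr (Sum.inl k)) (Sum.inr (Sum.inl j))) := by
    simpa only [hN4] using isUnit_repr_teichExpansion_sub b he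
      (by rw [hmon.natDegree_map, hdeg]) hdvd2 hb ((e + 1) * i)
  have hcol (i : ℕ) := mulVec_single_inl_of_col (hN1 i) (hN3 i)
  have hN (i : ℕ) : IsUnit (N i) := isUnit_of_col_inl (hN1 i) (hN3 i) (hA i)
  refine ⟨fun i _ => ⟨hN i, inPAutQ_zero (hcol i) (hA i)⟩, fun i j hi hj hij => ?_, fun E hE => ?_⟩
  · have hNij := Matrix.inv_inj hij ((Matrix.isUnit_iff_isUnit_det _).1 (hN i))
    refine eq_of_injOn_mul_add (k := 0) (k' := 0) hinj hi hj (Nat.zero_le e) (Nat.zero_le e) ?_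
    exact b.repr.injective (Finsupp.ext fun k => (hN2 i k).symm.trans (hNij ▸ hN2 j k))
  · simpa using Finset.exists_forall_not_of_card_lt (E := E)
      (S := Finset.Iic ((2 ^ (2 * e) - (e + 1)) / (e + 1)))
      (P := fun p i => bAct (N i)⁻¹ p ∈ binInfo e 0)
      (fun _ _ i hi j hj => eq_of_bAct_inv_mem_binInfo b hinj hN hcol hN2 hN4
        (Finset.mem_Iic.1 hi) (Finset.mem_Iic.1 hj)) (by simp [hE])
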